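/- The Gauss norm on the Amice ring is multiplicative: for f = ∑ a_i t^i and g = ∑ b_i t^i in E_K, defining ‖f‖ = sup_i ‖a_i‖, one has ‖fg‖ = ‖f‖·‖g‖. Consequently E_K, equipped with ‖·‖, is a normed integral domain (and in fact a nonarchimedean valued field). -/

import Mathlib

/-!
Every coefficient of `f * g` is a convergent sum of terms of norm at most `‖f‖ ‖g‖`, so the
ultrametric inequality gives `‖f g‖ ≤ ‖f‖ ‖g‖`. Conversely, since the absolute values of `K` lie
in `c ^ ℤ`, the Gauss norm of `f` is attained, and as the coefficients tend to `0` at `-∞` there is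
a least index `i₀` where it is attained; all earlier coefficients are then smaller by the factor
`c < 1`. With `j₀` chosen likewise for `g`, the term `f i₀ * g j₀` of the coefficient of
`t ^ (i₀ + j₀)` strictly dominates all the others, uniformly, so that coefficient has norm exactly
`‖f‖ ‖g‖`.
-/

open Filter Topology

variable {K : Type*} [NontriviallyNormedField K] [CompleteSpace K] [IsUltrametricDist K]

/-- Membership in the Amice ring. -/
def AmiceMem (a : ℤ → K) : Prop :=
  BddAbove (Set.range fun i : ℤ => ‖a i‖) ∧
    Tendsto (fun i : ℤ => ‖a i‖) atBot (𝓝 0)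

/-- Multiplication of doubly infinite series (convolution). -/
noncomputable def seriesMul (a b : ℤ → K) : ℤ → K :=
  fun n => ∑' i : ℤ, a i * b (n - i)

/-- The Gauss norm `‖∑ aᵢ tⁱ‖ = sup ‖aᵢ‖`. -/
noncomputable def gaussNorm (a : ℤ → K) : ℝ :=
  sSup (Set.range fun i : ℤ => ‖a i‖)

open Set

section DiscreteNorm

variable {E : Type*} [SeminormedAddGroup E] {c : ℝ}

lemma norm_le_mul_norm_of_norm_lt_of_discrete (hc0 : 0 < c) (hc1 : c < 1)
    (hc : ∀ x : E, x ≠ 0 → ∃ n : ℤ, ‖x‖ = c ^ n) {x y : E} (h : ‖x‖ < ‖y‖) :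
    ‖x‖ ≤ c * ‖y‖ := by
  obtain ⟨p, hp⟩ := hc y fun hy => (norm_nonneg x).not_gt (by simpa [hy] using h)
  by_cases hx : x = 0
  · rw [hx, norm_zero]
    positivity
  obtain ⟨m, hm⟩ := hc x hx
  rw [hm, hp] at h ⊢
  have hpm : p < m := (zpow_lt_zpow_iff_right_of_lt_one₀ hc0 hc1).1 h
  calc c ^ m ≤ c ^ (p + 1) := zpow_le_zpow_right_of_le_one₀ hc0 hc1.le (by omega)
    _ = c * c ^ p := by rw [zpow_add_one₀ hc0.ne', mul_comm]

lemma exists_forall_norm_le_of_discrete {ι : Type*} [Nonempty ι]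
    (hc0 : 0 < c) (hc1 : c < 1) (hc : ∀ x : E, x ≠ 0 → ∃ n : ℤ, ‖x‖ = c ^ n) {a : ι → E}
    (ha : BddAbove (range fun i => ‖a i‖)) : ∃ i, ∀ j, ‖a j‖ ≤ ‖a i‖ := by
  rcases le_or_gt (⨆ j, ‖a j‖) 0 with hA | hA
  · obtain ⟨i⟩ := ‹Nonempty ι›
    exact ⟨i, fun j => ((le_ciSup ha j).trans hA).trans (norm_nonneg _)⟩
  obtain ⟨i, hi⟩ := exists_lt_of_lt_ciSup (mul_lt_of_lt_one_left hA hc1)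
  refine ⟨i, fun j => not_lt.1 fun hij => ?_⟩
  have := norm_le_mul_norm_of_norm_lt_of_discrete hc0 hc1 hc hij
  have := mul_le_mul_of_nonneg_left (le_ciSup ha j) hc0.le
  linarith

end DiscreteNorm

lemma IsUltrametricDist.norm_tsum_eq_of_forall_ne_le {ι E : Type*} [NormedAddCommGroup E]
    [IsUltrametricDist E] {x : ι → E} (hx : Summable x) {i₀ : ι} {r : ℝ} (hr₀ : 0 ≤ r)
    (hr : r < ‖x i₀‖) (h : ∀ i ≠ i₀, ‖x i‖ ≤ r) : ‖∑' i, x i‖ = ‖x i₀‖ := by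
  classical
  have hrest : ‖∑' i, if i = i₀ then 0 else x i‖ < ‖x i₀‖ := by
    refine (norm_tsum_le_of_forall_le_of_nonneg hr₀ fun i => ?_).trans_lt hr
    split_ifs with hi
    · simpa using hr₀
    · exact h i hi
  rw [hx.tsum_eq_add_tsum_ite i₀, norm_add_eq_max_of_norm_ne_norm hrest.ne', max_eq_left hrest.le]

section Amice

variable {𝕜 : Type*} [NontriviallyNormedField 𝕜] {f g : ℤ → 𝕜} {c : ℝ}

@[simp]
lemma gaussNorm_zero : gaussNorm (0 : ℤ → 𝕜) = 0 := by
  simp [gaussNorm]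

lemma gaussNorm_nonneg (f : ℤ → 𝕜) : 0 ≤ gaussNorm f :=
  Real.iSup_nonneg fun _ => norm_nonneg _

lemma norm_le_gaussNorm (hf : BddAbove (range fun i => ‖f i‖)) (i : ℤ) : ‖f i‖ ≤ gaussNorm f :=
  le_ciSup hf i

lemma gaussNorm_pos (hf : BddAbove (range fun i => ‖f i‖)) (hf0 : f ≠ 0) : 0 < gaussNorm f := by
  obtain ⟨i, hi⟩ := Function.ne_iff.1 hf0
  exact (norm_pos_iff.2 hi).trans_le (norm_le_gaussNorm hf i)

lemma AmiceMem.summable_mul_sub [CompleteSpace 𝕜] [IsUltrametricDist 𝕜] (hf : AmiceMem f)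
    (hg : AmiceMem g) (n : ℤ) :
    Summable fun i => f i * g (n - i) := by
  refine NonarchimedeanAddGroup.summable_of_tendsto_cofinite_zero ?_
  rw [Int.cofinite_eq, tendsto_sup]
  have hsub : Tendsto (fun i : ℤ => n - i) atTop atBot :=
    tendsto_atTop_atBot.2 fun b => ⟨n - b, fun i hi => by omega⟩
  constructor
  · refine (tendsto_zero_iff_norm_tendsto_zero.2 hf.2).zero_mul_isBoundedUnder_le ?_
    exact (hg.1.mono (range_comp_subset_range (n - ·) _)).isBoundedUnder_of_range
  · refine isBoundedUnder_le_mul_tendsto_zero hf.1.isBoundedUnder_of_range ?_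
    exact (tendsto_zero_iff_norm_tendsto_zero.2 hg.2).comp hsub

lemma norm_seriesMul_le [IsUltrametricDist 𝕜] (hf : BddAbove (range fun i => ‖f i‖))
    (hg : BddAbove (range fun i => ‖g i‖)) (n : ℤ) :
    ‖seriesMul f g n‖ ≤ gaussNorm f * gaussNorm g := by
  refine IsUltrametricDist.norm_tsum_le_of_forall_le fun i => ?_
  rw [norm_mul]
  exact mul_le_mul (norm_le_gaussNorm hf i) (norm_le_gaussNorm hg _) (norm_nonneg _)
    (gaussNorm_nonneg f)

lemma gaussNorm_seriesMul_le [IsUltrametricDist 𝕜] (hf : BddAbove (range fun i => ‖f i‖))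
    (hg : BddAbove (range fun i => ‖g i‖)) :
    gaussNorm (seriesMul f g) ≤ gaussNorm f * gaussNorm g :=
  ciSup_le (norm_seriesMul_le hf hg)

lemma AmiceMem.exists_first_norm_eq_gaussNorm (hf : AmiceMem f) (hf0 : f ≠ 0)
    (hmax : ∃ i, ‖f i‖ = gaussNorm f) :
    ∃ i₀, ‖f i₀‖ = gaussNorm f ∧ ∀ i < i₀, ‖f i‖ < gaussNorm f := by
  have hsmall : ∀ᶠ i in atBot, ‖f i‖ < gaussNorm f :=
    hf.2.eventually (Iio_mem_nhds (gaussNorm_pos hf.1 hf0))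
  obtain ⟨N, hN⟩ := eventually_atBot.1 hsmall
  obtain ⟨i₀, hi₀, hleast⟩ := Int.exists_least_of_bdd
    ⟨N, fun i hi => not_lt.1 fun hiN => (hN i hiN.le).ne hi⟩ hmax
  exact ⟨i₀, hi₀, fun i hi => (norm_le_gaussNorm hf.1 i).lt_of_ne
    fun heq => (hleast i heq).not_gt hi⟩

lemma AmiceMem.exists_first_norm_eq_gaussNorm_of_discrete (hc0 : 0 < c) (hc1 : c < 1)
    (hc : ∀ x : 𝕜, x ≠ 0 → ∃ n : ℤ, ‖x‖ = c ^ n) (hf : AmiceMem f) (hf0 : f ≠ 0) :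
    ∃ i₀, ‖f i₀‖ = gaussNorm f ∧ ∀ i < i₀, ‖f i‖ ≤ c * gaussNorm f := by
  obtain ⟨i₁, hi₁⟩ := exists_forall_norm_le_of_discrete hc0 hc1 hc hf.1
  have hmax : ‖f i₁‖ = gaussNorm f := (norm_le_gaussNorm hf.1 i₁).antisymm (ciSup_le hi₁)
  obtain ⟨i₀, hi₀, hlt⟩ := hf.exists_first_norm_eq_gaussNorm hf0 ⟨i₁, hmax⟩
  refine ⟨i₀, hi₀, fun i hi => ?_⟩
  rw [← hi₀]
  exact norm_le_mul_norm_of_norm_lt_of_discrete hc0 hc1 hc (hi₀ ▸ hlt i hi)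

lemma AmiceMem.norm_seriesMul_add_eq [CompleteSpace 𝕜] [IsUltrametricDist 𝕜]
    (hc0 : 0 ≤ c) (hc1 : c < 1) (hf : AmiceMem f) (hg : AmiceMem g) (hf0 : f ≠ 0) (hg0 : g ≠ 0)
    {i₀ j₀ : ℤ} (hi₀ : ‖f i₀‖ = gaussNorm f) (hfi : ∀ i < i₀, ‖f i‖ ≤ c * gaussNorm f)
    (hj₀ : ‖g j₀‖ = gaussNorm g) (hgj : ∀ j < j₀, ‖g j‖ ≤ c * gaussNorm g) :
    ‖seriesMul f g (i₀ + j₀)‖ = gaussNorm f * gaussNorm g := by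
  have hA := gaussNorm_pos hf.1 hf0
  have hB := gaussNorm_pos hg.1 hg0
  have hlead : ‖f i₀ * g (i₀ + j₀ - i₀)‖ = gaussNorm f * gaussNorm g := by
    rw [norm_mul, add_sub_cancel_left, hi₀, hj₀]
  have hdominant : c * (gaussNorm f * gaussNorm g) < ‖f i₀ * g (i₀ + j₀ - i₀)‖ := by
    rw [hlead]
    exact mul_lt_of_lt_one_left (mul_pos hA hB) hc1
  rw [← hlead]
  refine IsUltrametricDist.norm_tsum_eq_of_forall_ne_le (hf.summable_mul_sub hg _)
    (by positivity) hdominant fun i hi => ?_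
  rw [norm_mul]
  rcases hi.lt_or_gt with hlt | hgt
  · calc ‖f i‖ * ‖g (i₀ + j₀ - i)‖ ≤ c * gaussNorm f * gaussNorm g :=
          mul_le_mul (hfi i hlt) (norm_le_gaussNorm hg.1 _) (norm_nonneg _) (by positivity)
      _ = _ := by ring
  · calc ‖f i‖ * ‖g (i₀ + j₀ - i)‖ ≤ gaussNorm f * (c * gaussNorm g) :=
          mul_le_mul (norm_le_gaussNorm hf.1 i) (hgj _ (by omega)) (norm_nonneg _) hA.le
      _ = _ := by ring

end Amice

/-- The Gauss norm on the Amice ring is multiplicative, and consequently `E_K` is an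
integral domain.  The hypothesis `hdisc` says that `K` is discretely valued. -/
theorem gaussNorm_mul
    (hdisc : ∃ c : ℝ, 0 < c ∧ c < 1 ∧ ∀ x : K, x ≠ 0 → ∃ n : ℤ, ‖x‖ = c ^ n)
    (f g : ℤ → K) (hf : AmiceMem f) (hg : AmiceMem g) :
    gaussNorm (seriesMul f g) = gaussNorm f * gaussNorm g ∧
      (f ≠ 0 → g ≠ 0 → seriesMul f g ≠ 0) := by
  obtain ⟨c, hc0, hc1, hc⟩ := hdisc
  have hle := gaussNorm_seriesMul_le hf.1 hg.1
  by_cases hfg : f = 0 ∨ g = 0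
  · have hzero : gaussNorm f * gaussNorm g = 0 := by
      rcases hfg with rfl | rfl <;> simp
    rw [hzero]
    exact ⟨(hle.trans_eq hzero).antisymm (gaussNorm_nonneg _), by tauto⟩
  obtain ⟨hf0, hg0⟩ := not_or.1 hfg
  obtain ⟨i₀, hi₀, hfi⟩ := hf.exists_first_norm_eq_gaussNorm_of_discrete hc0 hc1 hc hf0
  obtain ⟨j₀, hj₀, hgj⟩ := hg.exists_first_norm_eq_gaussNorm_of_discrete hc0 hc1 hc hg0
  have hattained := hf.norm_seriesMul_add_eq hc0.le hc1 hg hf0 hg0 hi₀ hfi hj₀ hgj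
  have heq : gaussNorm (seriesMul f g) = gaussNorm f * gaussNorm g :=
    hle.antisymm (hattained ▸ le_ciSup ⟨_, forall_mem_range.2 (norm_seriesMul_le hf.1 hg.1)⟩ _)
  refine ⟨heq, fun _ _ hzero => ?_⟩
  have hpos := mul_pos (gaussNorm_pos hf.1 hf0) (gaussNorm_pos hg.1 hg0)
  rw [← heq, hzero, gaussNorm_zero] at hpos
  exact hpos.false
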